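/- On ℝ³ parametrized by coordinates (ρ, z) with ρ > 0, the function A(ρ,z) = (z+α)/(ρ·R₁) + (z-α)/(ρ·R₂), where R₁ = √(ρ² + (z+α)²) and R₂ = √(ρ² + (z-α)²), satisfies -∂_z A = ∂_ρ (1/R₁ + 1/R₂) wherever R₁, R₂ > 0. -/

import Mathlib

/-! Each center contributes separately. Writing `w` for the axial offset from a center and
`R = √(ρ² + w²)`, both `∂_w (w / (ρ R))` and `-∂_ρ (1 / R)` equal `ρ / R³`. -/

open Real

lemma hasDerivAt_sqrt_sq_add_sq_left (a w : ℝ) (h : a ^ 2 + w ^ 2 ≠ 0) :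
    HasDerivAt (fun x : ℝ => √(x ^ 2 + w ^ 2)) (a / √(a ^ 2 + w ^ 2)) a := by
  have hsum : HasDerivAt (fun x : ℝ => x ^ 2 + w ^ 2) (2 * a) a := by
    simpa using (hasDerivAt_pow 2 a).add_const (w ^ 2)
  convert hsum.sqrt h using 1
  field_simp

lemma hasDerivAt_sqrt_sq_add_sq_right (a w : ℝ) (h : a ^ 2 + w ^ 2 ≠ 0) :
    HasDerivAt (fun x : ℝ => √(a ^ 2 + x ^ 2)) (w / √(a ^ 2 + w ^ 2)) w := by
  simpa only [add_comm (a ^ 2)] using hasDerivAt_sqrt_sq_add_sq_left w a (by rwa [add_comm])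

lemma hasDerivAt_div_mul_sqrt_sq_add_sq (ρ w : ℝ) (hρ : ρ ≠ 0) :
    HasDerivAt (fun x : ℝ => x / (ρ * √(ρ ^ 2 + x ^ 2))) (ρ / √(ρ ^ 2 + w ^ 2) ^ 3) w := by
  have hpos : 0 < ρ ^ 2 + w ^ 2 := by positivity
  have hR : 0 < √(ρ ^ 2 + w ^ 2) := sqrt_pos.mpr hpos
  have hquot := (hasDerivAt_id' w).div
    ((hasDerivAt_sqrt_sq_add_sq_right ρ w hpos.ne').const_mul ρ) (by positivity)
  refine hquot.congr_deriv ?_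
  field_simp
  linear_combination sq_sqrt hpos.le

lemma hasDerivAt_one_div_sqrt_sq_add_sq (ρ w : ℝ) (hρ : ρ ≠ 0) :
    HasDerivAt (fun x : ℝ => 1 / √(x ^ 2 + w ^ 2)) (-(ρ / √(ρ ^ 2 + w ^ 2) ^ 3)) ρ := by
  have hpos : 0 < ρ ^ 2 + w ^ 2 := by positivity
  have hR : 0 < √(ρ ^ 2 + w ^ 2) := sqrt_pos.mpr hpos
  have hquot := (hasDerivAt_const ρ (1 : ℝ)).div
    (hasDerivAt_sqrt_sq_add_sq_left ρ w hpos.ne') hR.ne'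
  refine hquot.congr_deriv ?_
  field_simp
  ring

theorem gibbons_hawking_connection_general (α ρ z : ℝ) (hρ : 0 < ρ) :
    ∃ D : ℝ,
      HasDerivAt (fun z' : ℝ =>
          (z' + α) / (ρ * Real.sqrt (ρ ^ 2 + (z' + α) ^ 2)) +
          (z' - α) / (ρ * Real.sqrt (ρ ^ 2 + (z' - α) ^ 2))) (-D) z ∧
      HasDerivAt (fun ρ' : ℝ =>
          1 / Real.sqrt (ρ' ^ 2 + (z + α) ^ 2) +
          1 / Real.sqrt (ρ' ^ 2 + (z - α) ^ 2)) D ρ := by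
  refine ⟨-(ρ / √(ρ ^ 2 + (z + α) ^ 2) ^ 3) + -(ρ / √(ρ ^ 2 + (z - α) ^ 2) ^ 3), ?_,
    (hasDerivAt_one_div_sqrt_sq_add_sq ρ _ hρ.ne').add
      (hasDerivAt_one_div_sqrt_sq_add_sq ρ _ hρ.ne')⟩
  rw [neg_add, neg_neg, neg_neg]
  exact ((hasDerivAt_div_mul_sqrt_sq_add_sq ρ _ hρ.ne').comp_add_const z α).add
    ((hasDerivAt_div_mul_sqrt_sq_add_sq ρ _ hρ.ne').comp_sub_const z α)

/-- Gibbons-Hawking with two centers at `z = ±α`: the connection coefficient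
`A(ρ,z) = (z+α)/(ρR₁) + (z-α)/(ρR₂)` satisfies `-∂_z A = ∂_ρ V`, where
`V = 1/R₁ + 1/R₂`, `R₁ = √(ρ²+(z+α)²)`, `R₂ = √(ρ²+(z-α)²)`, wherever `R₁, R₂ > 0`. -/
theorem gibbons_hawking_connection (α ρ z : ℝ) (hα : 0 < α) (hρ : 0 < ρ)
    (hR1 : 0 < Real.sqrt (ρ ^ 2 + (z + α) ^ 2))
    (hR2 : 0 < Real.sqrt (ρ ^ 2 + (z - α) ^ 2)) :
    ∃ D : ℝ,
      HasDerivAt (fun z' : ℝ =>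
          (z' + α) / (ρ * Real.sqrt (ρ ^ 2 + (z' + α) ^ 2)) +
          (z' - α) / (ρ * Real.sqrt (ρ ^ 2 + (z' - α) ^ 2))) (-D) z ∧
      HasDerivAt (fun ρ' : ℝ =>
          1 / Real.sqrt (ρ' ^ 2 + (z + α) ^ 2) +
          1 / Real.sqrt (ρ' ^ 2 + (z - α) ^ 2)) D ρ :=
  gibbons_hawking_connection_general α ρ z hρ
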